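/- arXiv:1906.03690 — 2 statements merged into one kernel-verified Lean document; each statement's English description precedes it below -/
import Mathlib

section
/- Let β(t) = (q(1−q)μ²/ς²)·(1 − e^{−2α₄ t}) / (α₄ + α₁ + (α₄ − α₁)e^{−2α₄ t}) and define γ(t) = α₃·exp(−∫₀ᵗ (α₁ + α₂β(s)) ds)·∫₀ᵗ β(s)·exp(∫₀ˢ (α₁ + α₂β(u)) du) ds (the solution of γ' = −(α₁+α₂β)γ + α₃β with γ(0) = 0). Then γ(t) → C as t → ∞, and there exists c₀ > 0 such that |C − γ(t)| ≤ c₀·e^{−α₄ t} for all t ≥ 0. -/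
open Filter Topology

/-!
With `D(t) = α₄ + α₁ + (α₄ - α₁) e^{-2α₄t}`, the identity `α₂ M = α₄² - α₁²` (where
`M = q(1-q)μ²/ς²`) makes `α₁ + α₂ β` the derivative of `α₄ t + log D(t)`. Hence the integrating
factor is `e^{α₄t} D(t) / (2α₄)`, the integrand of `γ` becomes `M sinh(α₄ s) / α₄`, and in
closed form `γ(t) = C (α₄ + α₁)(1 - x)² / D(t)` with `x = e^{-α₄t}`. So
`C - γ(t) = 2 C x (α₄ + α₁(1 - x)) / D(t)`, which is `O(x)` because `D(t) ≥ α₄ + α₁ > 0`.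
-/

open Real

lemma exp_neg_two_mul (a t : ℝ) : exp (-2 * a * t) = exp (-a * t) ^ 2 := by
  rw [← exp_nat_mul]; ring_nf

lemma tendsto_of_abs_sub_le_mul_exp {f : ℝ → ℝ} {C c a : ℝ} (ha : 0 < a)
    (h : ∀ t ≥ 0, |C - f t| ≤ c * exp (-a * t)) : Tendsto f atTop (𝓝 C) := by
  have hexp : Tendsto (fun t => c * exp (-a * t)) atTop (𝓝 0) := by
    simpa using ((tendsto_exp_atBot.comp
      (tendsto_id.const_mul_atTop_of_neg (neg_lt_zero.2 ha))).const_mul c)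
  refine tendsto_sub_nhds_zero_iff.1 (squeeze_zero_norm' ?_ hexp)
  filter_upwards [eventually_ge_atTop 0] with t ht
  simpa [abs_sub_comm] using h t ht

lemma abs_lt_sqrt_sq_add {a b : ℝ} (hb : 0 < b) : |a| < √(a ^ 2 + b) := by
  rw [← sqrt_sq_eq_abs]
  exact sqrt_lt_sqrt (sq_nonneg a) (by linarith)

namespace KimOmberg

variable (a₁ a₂ a₃ a₄ M : ℝ)

noncomputable def den (t : ℝ) : ℝ := a₄ + a₁ + (a₄ - a₁) * exp (-2 * a₄ * t)

noncomputable def beta (t : ℝ) : ℝ := M * (1 - exp (-2 * a₄ * t)) / den a₁ a₄ t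

noncomputable def gamma (t : ℝ) : ℝ :=
  a₃ * exp (-(∫ s in (0 : ℝ)..t, (a₁ + a₂ * beta a₁ a₄ M s))) *
    ∫ s in (0 : ℝ)..t, beta a₁ a₄ M s * exp (∫ u in (0 : ℝ)..s, (a₁ + a₂ * beta a₁ a₄ M u))

variable {a₁ a₂ a₃ a₄ M}

lemma den_eq (t : ℝ) : den a₁ a₄ t = a₄ + a₁ + (a₄ - a₁) * exp (-a₄ * t) ^ 2 := by
  rw [den, exp_neg_two_mul]

lemma den_zero : den a₁ a₄ 0 = 2 * a₄ := by
  simp [den]; ring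

lemma add_le_den (ha : |a₁| < a₄) (t : ℝ) : a₄ + a₁ ≤ den a₁ a₄ t := by
  have : 0 ≤ (a₄ - a₁) * exp (-2 * a₄ * t) :=
    mul_nonneg (by linarith [le_abs_self a₁]) (exp_pos _).le
  rw [den]; linarith

lemma den_pos (ha : |a₁| < a₄) (t : ℝ) : 0 < den a₁ a₄ t :=
  lt_of_lt_of_le (by linarith [neg_abs_le a₁]) (add_le_den ha t)

lemma hasDerivAt_den (t : ℝ) :
    HasDerivAt (den a₁ a₄) ((a₄ - a₁) * (-2 * a₄ * exp (-2 * a₄ * t))) t :=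
  ((((hasDerivAt_id t).const_mul (-2 * a₄)).exp.const_mul (a₄ - a₁)).const_add
    (a₄ + a₁)).congr_deriv (by simp only [id_eq]; ring)

lemma continuous_beta (ha : |a₁| < a₄) : Continuous (beta a₁ a₄ M) :=
  Continuous.div (by fun_prop) (by unfold den; fun_prop) fun t => (den_pos ha t).ne'

lemma hasDerivAt_log_den (ha : |a₁| < a₄) (hM : a₂ * M = a₄ ^ 2 - a₁ ^ 2) (t : ℝ) :
    HasDerivAt (fun u => a₄ * u + log (den a₁ a₄ u)) (a₁ + a₂ * beta a₁ a₄ M t) t := by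
  refine (((hasDerivAt_id t).const_mul a₄).add
    ((hasDerivAt_den t).log (den_pos ha t).ne')).congr_deriv ?_
  have hD := (den_pos ha t).ne'
  rw [beta]
  unfold den at hD ⊢
  generalize exp (-2 * a₄ * t) = E at hD ⊢
  field_simp
  linear_combination (E - 1) * hM

lemma exp_integral_rate (ha : |a₁| < a₄) (hM : a₂ * M = a₄ ^ 2 - a₁ ^ 2) (t : ℝ) :
    exp (∫ s in (0 : ℝ)..t, (a₁ + a₂ * beta a₁ a₄ M s)) =
      exp (a₄ * t) * den a₁ a₄ t / (2 * a₄) := by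
  have h4 : 0 < 2 * a₄ := by linarith [abs_nonneg a₁]
  rw [intervalIntegral.integral_eq_sub_of_hasDerivAt (fun u _ => hasDerivAt_log_den ha hM u)
      ((continuous_const.add
      (continuous_const.mul (continuous_beta ha))).intervalIntegrable _ _),
    den_zero, exp_sub, exp_add, exp_add, exp_log (den_pos ha t), exp_log h4, mul_zero, exp_zero,
    one_mul]

lemma beta_mul_exp_integral_rate (ha : |a₁| < a₄) (hM : a₂ * M = a₄ ^ 2 - a₁ ^ 2) (s : ℝ) :
    beta a₁ a₄ M s * exp (∫ u in (0 : ℝ)..s, (a₁ + a₂ * beta a₁ a₄ M u)) =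
      M / (2 * a₄) * (exp (a₄ * s) - exp (-a₄ * s)) := by
  have hD := (den_pos ha s).ne'
  have hx := (exp_pos (-a₄ * s)).ne'
  rw [exp_integral_rate ha hM, beta, exp_neg_two_mul, show a₄ * s = -(-a₄ * s) by ring, exp_neg]
  field_simp

lemma integral_beta_mul_exp_integral_rate (ha : |a₁| < a₄) (hM : a₂ * M = a₄ ^ 2 - a₁ ^ 2)
    (t : ℝ) :
    ∫ s in (0 : ℝ)..t, beta a₁ a₄ M s * exp (∫ u in (0 : ℝ)..s, (a₁ + a₂ * beta a₁ a₄ M u)) =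
      M / (2 * a₄ ^ 2) * (exp (a₄ * t) + exp (-a₄ * t) - 2) := by
  have h4 : a₄ ≠ 0 := by linarith [abs_nonneg a₁]
  have hF (s : ℝ) : HasDerivAt (fun u => M / (2 * a₄ ^ 2) * (exp (a₄ * u) + exp (-a₄ * u)))
      (M / (2 * a₄) * (exp (a₄ * s) - exp (-a₄ * s))) s := by
    refine ((((hasDerivAt_id s).const_mul a₄).exp.add
      ((hasDerivAt_id s).const_mul (-a₄)).exp).const_mul _).congr_deriv ?_
    simp only [id_eq]
    field_simp
    ring
  simp only [beta_mul_exp_integral_rate ha hM]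
  rw [intervalIntegral.integral_eq_sub_of_hasDerivAt (fun s _ => hF s)
    (Continuous.intervalIntegrable (by fun_prop) _ _)]
  simp only [mul_zero, exp_zero]
  ring

lemma gamma_eq (ha : |a₁| < a₄) (hM : a₂ * M = a₄ ^ 2 - a₁ ^ 2) (t : ℝ) :
    gamma a₁ a₂ a₃ a₄ M t =
      a₃ * M / (a₄ * (a₄ + a₁)) * ((a₄ + a₁) * (1 - exp (-a₄ * t)) ^ 2 / den a₁ a₄ t) := by
  have h4 : a₄ ≠ 0 := by linarith [abs_nonneg a₁]
  have hs : a₄ + a₁ ≠ 0 := by linarith [neg_abs_le a₁]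
  have hD := (den_pos ha t).ne'
  have hx := (exp_pos (-a₄ * t)).ne'
  rw [gamma, integral_beta_mul_exp_integral_rate ha hM, exp_neg, exp_integral_rate ha hM,
    show a₄ * t = -(-a₄ * t) by ring, exp_neg]
  rw [den_eq] at hD ⊢
  field_simp
  ring

lemma sub_gamma_eq (ha : |a₁| < a₄) (hM : a₂ * M = a₄ ^ 2 - a₁ ^ 2) (t : ℝ) :
    a₃ * M / (a₄ * (a₄ + a₁)) - gamma a₁ a₂ a₃ a₄ M t =
      a₃ * M / (a₄ * (a₄ + a₁)) *
        (2 * exp (-a₄ * t) * (a₄ + a₁ * (1 - exp (-a₄ * t))) / den a₁ a₄ t) := by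
  rw [gamma_eq ha hM, ← mul_one_sub, one_sub_div (den_pos ha t).ne', den_eq]
  ring

lemma abs_sub_gamma_le (ha : |a₁| < a₄) (hM : a₂ * M = a₄ ^ 2 - a₁ ^ 2) {t : ℝ} (ht : 0 ≤ t) :
    |a₃ * M / (a₄ * (a₄ + a₁)) - gamma a₁ a₂ a₃ a₄ M t| ≤
      |a₃ * M / (a₄ * (a₄ + a₁))| * (4 * a₄ / (a₄ + a₁)) * exp (-a₄ * t) := by
  have h4 : 0 < a₄ := by linarith [abs_nonneg a₁]
  have hs : 0 < a₄ + a₁ := by linarith [neg_abs_le a₁]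
  have hx0 := exp_pos (-a₄ * t)
  have hx1 : exp (-a₄ * t) ≤ 1 := exp_le_one_iff.2 (by nlinarith)
  have hnum : |a₁ * (1 - exp (-a₄ * t))| ≤ a₄ := by
    rw [abs_mul, abs_of_nonneg (sub_nonneg.2 hx1)]
    nlinarith [abs_nonneg a₁]
  have hratio_nonneg :
      0 ≤ 2 * exp (-a₄ * t) * (a₄ + a₁ * (1 - exp (-a₄ * t))) / den a₁ a₄ t := by
    have := (abs_le.1 hnum).1
    exact div_nonneg (mul_nonneg (by positivity) (by linarith)) (den_pos ha t).le
  have hratio : 2 * exp (-a₄ * t) * (a₄ + a₁ * (1 - exp (-a₄ * t))) / den a₁ a₄ t ≤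
      2 * exp (-a₄ * t) * (2 * a₄) / (a₄ + a₁) :=
    div_le_div₀ (by positivity) (by gcongr; linarith [(abs_le.1 hnum).2]) hs (add_le_den ha t)
  rw [sub_gamma_eq ha hM, abs_mul, abs_of_nonneg hratio_nonneg,
    mul_assoc |a₃ * M / (a₄ * (a₄ + a₁))|]
  exact mul_le_mul_of_nonneg_left (hratio.trans_eq
    (by ring : _ = 4 * a₄ / (a₄ + a₁) * exp (-a₄ * t))) (abs_nonneg _)

theorem tendsto_gamma (ha : |a₁| < a₄) (hM : a₂ * M = a₄ ^ 2 - a₁ ^ 2) :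
    Tendsto (gamma a₁ a₂ a₃ a₄ M) atTop (𝓝 (a₃ * M / (a₄ * (a₄ + a₁)))) :=
  tendsto_of_abs_sub_le_mul_exp (by linarith [abs_nonneg a₁])
    fun _ ht => abs_sub_gamma_le ha hM ht

theorem exists_abs_sub_gamma_le (ha : |a₁| < a₄) (hM : a₂ * M = a₄ ^ 2 - a₁ ^ 2) :
    ∃ c₀ > (0 : ℝ), ∀ t ≥ (0 : ℝ),
      |a₃ * M / (a₄ * (a₄ + a₁)) - gamma a₁ a₂ a₃ a₄ M t| ≤ c₀ * exp (-a₄ * t) := by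
  have h4 : 0 ≤ a₄ := by linarith [abs_nonneg a₁]
  have hs : 0 < a₄ + a₁ := by linarith [neg_abs_le a₁]
  have hc : 0 ≤ |a₃ * M / (a₄ * (a₄ + a₁))| * (4 * a₄ / (a₄ + a₁)) := by positivity
  refine ⟨|a₃ * M / (a₄ * (a₄ + a₁))| * (4 * a₄ / (a₄ + a₁)) + 1, by linarith,
    fun t ht => (abs_sub_gamma_le ha hM ht).trans ?_⟩
  gcongr
  linarith

end KimOmberg

open KimOmberg in
theorem stmt6_general (μ ς σ ρ q : ℝ)
    (hμ : μ ≠ 0) (hς : 0 < ς) (hσ : 0 < σ)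
    (hρ : ρ ∈ Set.Ioo (-1 : ℝ) 1) (hq : q ∈ Set.Ioo (0 : ℝ) 1)
    (σ₁ σ₂ α₁ α₂ α₃ α₄ C : ℝ)
    (hσ₂ : σ₂ = Real.sqrt (1 - ρ ^ 2) * σ)
    (hα₂ : α₂ = σ₁ ^ 2 + σ₂ ^ 2 / (1 - q))
    (hα₄ : α₄ = Real.sqrt (α₁ ^ 2 + q * (1 - q) * α₂ * μ ^ 2 / ς ^ 2))
    (hC : C = α₃ * (α₄ - α₁) / (α₂ * α₄))
    (β γ : ℝ → ℝ)
    (hβ : ∀ t, β t = (q * (1 - q) * μ ^ 2 / ς ^ 2) * (1 - Real.exp (-2 * α₄ * t)) /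
        (α₄ + α₁ + (α₄ - α₁) * Real.exp (-2 * α₄ * t)))
    (hγ : ∀ t, γ t = α₃ * Real.exp (-(∫ s in (0 : ℝ)..t, (α₁ + α₂ * β s))) *
        ∫ s in (0 : ℝ)..t, β s * Real.exp (∫ u in (0 : ℝ)..s, (α₁ + α₂ * β u))) :
    Tendsto γ atTop (𝓝 C) ∧
    ∃ c₀ > (0 : ℝ), ∀ t ≥ (0 : ℝ), |C - γ t| ≤ c₀ * Real.exp (-α₄ * t) := by
  obtain ⟨hq₀, hq₁⟩ := hq
  have hσ₂_sq : 0 < σ₂ ^ 2 := by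
    rw [hσ₂, mul_pow, sq_sqrt (by nlinarith [hρ.1, hρ.2])]
    exact mul_pos (by nlinarith [hρ.1, hρ.2]) (by positivity)
  have hα₂_pos : 0 < α₂ := by
    rw [hα₂]
    exact add_pos_of_nonneg_of_pos (sq_nonneg σ₁) (div_pos hσ₂_sq (by linarith))
  set M := q * (1 - q) * μ ^ 2 / ς ^ 2 with hM_def
  have hαM : 0 < α₂ * M :=
    mul_pos hα₂_pos (div_pos (mul_pos (mul_pos hq₀ (by linarith)) (by positivity)) (by positivity))
  have hα₄' : α₄ = √(α₁ ^ 2 + α₂ * M) := by rw [hα₄, hM_def]; ring_nf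
  have ha : |α₁| < α₄ := hα₄' ▸ abs_lt_sqrt_sq_add hαM
  have hM : α₂ * M = α₄ ^ 2 - α₁ ^ 2 := by
    rw [hα₄', sq_sqrt (by positivity)]; ring
  have hC' : C = α₃ * M / (α₄ * (α₄ + α₁)) := by
    have h₄ : 0 < α₄ := (abs_nonneg α₁).trans_lt ha
    have hs : 0 < α₄ + α₁ := by linarith [neg_abs_le α₁]
    rw [hC, div_eq_div_iff (mul_pos hα₂_pos h₄).ne' (mul_pos h₄ hs).ne']
    linear_combination (-α₃ * α₄) * hM
  obtain rfl : β = beta α₁ α₄ M := funext hβ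
  obtain rfl : γ = gamma α₁ α₂ α₃ α₄ M := funext hγ
  exact hC' ▸ ⟨tendsto_gamma ha hM, exists_abs_sub_gamma_le ha hM⟩

/-- Kim–Omberg model: the solution
`γ(t) = α₃ e^{-∫₀ᵗ(α₁+α₂β)} ∫₀ᵗ β(s) e^{∫₀ˢ(α₁+α₂β)} ds` of
`γ' = -(α₁+α₂β)γ + α₃β`, `γ(0)=0`, converges to `C` as `t → ∞`, and there exists `c₀ > 0`
with `|C - γ(t)| ≤ c₀ e^{-α₄ t}` for all `t ≥ 0`. -/
theorem stmt6 (k m μ ς σ ρ q : ℝ)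
    (hk : 0 < k) (hμ : μ ≠ 0) (hς : 0 < ς) (hσ : 0 < σ)
    (hρ : ρ ∈ Set.Ioo (-1 : ℝ) 1) (hq : q ∈ Set.Ioo (0 : ℝ) 1)
    (σ₁ σ₂ α₁ α₂ α₃ α₄ B C : ℝ)
    (hσ₁ : σ₁ = ρ * σ) (hσ₂ : σ₂ = Real.sqrt (1 - ρ ^ 2) * σ)
    (hα₁ : α₁ = k + q * μ * σ₁ / ς) (hα₂ : α₂ = σ₁ ^ 2 + σ₂ ^ 2 / (1 - q))
    (hα₃ : α₃ = k * m)
    (hα₄ : α₄ = Real.sqrt (α₁ ^ 2 + q * (1 - q) * α₂ * μ ^ 2 / ς ^ 2))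
    (hB : B = (α₄ - α₁) / α₂) (hC : C = α₃ * (α₄ - α₁) / (α₂ * α₄))
    (β γ : ℝ → ℝ)
    (hβ : ∀ t, β t = (q * (1 - q) * μ ^ 2 / ς ^ 2) * (1 - Real.exp (-2 * α₄ * t)) /
        (α₄ + α₁ + (α₄ - α₁) * Real.exp (-2 * α₄ * t)))
    (hγ : ∀ t, γ t = α₃ * Real.exp (-(∫ s in (0 : ℝ)..t, (α₁ + α₂ * β s))) *
        ∫ s in (0 : ℝ)..t, β s * Real.exp (∫ u in (0 : ℝ)..s, (α₁ + α₂ * β u))) :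
    Tendsto γ atTop (𝓝 C) ∧
    ∃ c₀ > (0 : ℝ), ∀ t ≥ (0 : ℝ), |C - γ t| ≤ c₀ * Real.exp (-α₄ * t) :=
  stmt6_general μ ς σ ρ q hμ hς hσ hρ hq σ₁ σ₂ α₁ α₂ α₃ α₄ C hσ₂ hα₂ hα₄ hC β γ hβ hγ
end

section
/- With β(t) = q(1−q)(μ²/ς²)·sinh(β₂t/2) / (β₂·cosh(β₂t/2) + β₁·sinh(β₂t/2)), the function γ(t) := k·m̄·∫₀ᵗ β(s) ds satisfies γ(t)/t → k·m̄·B = λ as t → ∞. -/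
/-!
Since `|β₁| < β₂`, the denominator `β₂ cosh + β₁ sinh` never vanishes, and multiplying numerator
and denominator by `2e^{-x}` shows `sinh x / (β₂ cosh x + β₁ sinh x) → 1 / (β₂ + β₁)`. Hence `β`
tends to `q(1-q)(μ²/ς²) / (β₂ + β₁)`, and by the integral form of Cesàro's theorem so does
`γ(t) / (k m̄ t)`. Finally `(β₂ - β₁)(β₂ + β₁) = q(1 - qρ²)μ²σ²/ς²` identifies this limit with `B`.
-/

open Filter Topology Real MeasureTheory

theorem two_mul_exp_neg_mul_sinh (x : ℝ) : 2 * exp (-x) * sinh x = 1 - exp (-(2 * x)) := by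
  have h : exp (-x) * exp x = 1 := by rw [← exp_add]; simp
  rw [sinh_eq, show -(2 * x) = -x + -x by ring, exp_add]
  linear_combination h

theorem two_mul_exp_neg_mul_cosh (x : ℝ) : 2 * exp (-x) * cosh x = 1 + exp (-(2 * x)) := by
  have h : exp (-x) * exp x = 1 := by rw [← exp_add]; simp
  rw [cosh_eq, show -(2 * x) = -x + -x by ring, exp_add]
  linear_combination h

theorem sinh_div_mul_cosh_add_mul_sinh (a b x : ℝ) :
    sinh x / (a * cosh x + b * sinh x) =
      (1 - exp (-(2 * x))) / (a * (1 + exp (-(2 * x))) + b * (1 - exp (-(2 * x)))) := by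
  rw [← two_mul_exp_neg_mul_sinh, ← two_mul_exp_neg_mul_cosh,
    ← mul_div_mul_left _ _ (by positivity : 2 * exp (-x) ≠ 0)]
  ring_nf

theorem tendsto_sinh_div_mul_cosh_add_mul_sinh {a b : ℝ} (hab : a + b ≠ 0) :
    Tendsto (fun x => sinh x / (a * cosh x + b * sinh x)) atTop (𝓝 (a + b)⁻¹) := by
  have hexp : Tendsto (fun x : ℝ => exp (-(2 * x))) atTop (𝓝 0) :=
    tendsto_exp_atBot.comp (tendsto_neg_atTop_atBot.comp (tendsto_id.const_mul_atTop two_pos))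
  have hg : ContinuousAt (fun y : ℝ => (1 - y) / (a * (1 + y) + b * (1 - y))) 0 :=
    (continuousAt_const.sub continuousAt_id).div (by fun_prop) (by simpa using hab)
  simpa [sinh_div_mul_cosh_add_mul_sinh, Function.comp_def] using hg.tendsto.comp hexp

theorem tendsto_integral_div_of_tendsto_zero {f : ℝ → ℝ} (hf : LocallyIntegrable f)
    (h : Tendsto f atTop (𝓝 0)) :
    Tendsto (fun t => (∫ s in (0 : ℝ)..t, f s) / t) atTop (𝓝 0) := by
  have hii (a b : ℝ) : IntervalIntegrable f volume a b :=
    (hf.integrableOn_isCompact isCompact_uIcc).intervalIntegrable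
  refine Metric.tendsto_nhds.2 fun ε hε => ?_
  obtain ⟨T, hT⟩ := eventually_atTop.1 (Metric.tendsto_nhds.1 h (ε / 2) (half_pos hε))
  set T₀ := max T 0
  have hhead : Tendsto (fun t => (∫ s in (0 : ℝ)..T₀, f s) / t) atTop (𝓝 0) :=
    tendsto_const_nhds.div_atTop tendsto_id
  filter_upwards [Metric.tendsto_nhds.1 hhead (ε / 2) (half_pos hε), eventually_gt_atTop T₀]
    with t hhead_t hT₀t
  have ht : 0 < t := (le_max_right T 0).trans_lt hT₀t
  have htail : ‖∫ s in T₀..t, f s‖ ≤ ε / 2 * |t - T₀| :=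
    intervalIntegral.norm_integral_le_of_norm_le_const fun s hs => by
      rw [Set.uIoc_of_le hT₀t.le] at hs
      simpa using (hT s ((le_max_left T 0).trans hs.1.le)).le
  have htail_t : ‖(∫ s in T₀..t, f s) / t‖ ≤ ε / 2 := by
    rw [norm_div, Real.norm_of_nonneg ht.le, div_le_iff₀ ht]
    rw [abs_of_pos (sub_pos.2 hT₀t)] at htail
    nlinarith [le_max_right T 0]
  rw [dist_zero_right] at hhead_t ⊢
  rw [← intervalIntegral.integral_add_adjacent_intervals (hii 0 T₀) (hii T₀ t), add_div]
  linarith [norm_add_le ((∫ s in (0 : ℝ)..T₀, f s) / t) ((∫ s in T₀..t, f s) / t)]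

theorem tendsto_integral_div_of_tendsto {f : ℝ → ℝ} {L : ℝ} (hf : LocallyIntegrable f)
    (h : Tendsto f atTop (𝓝 L)) :
    Tendsto (fun t => (∫ s in (0 : ℝ)..t, f s) / t) atTop (𝓝 L) := by
  have h₀ := tendsto_integral_div_of_tendsto_zero (f := fun s => f s - L)
    (hf.sub (locallyIntegrable_const L)) (by simpa using h.sub_const L)
  rw [← zero_add L]
  refine (h₀.add_const L).congr' ?_
  filter_upwards [eventually_ne_atTop 0] with t ht
  rw [intervalIntegral.integral_sub ((hf.integrableOn_isCompact isCompact_uIcc).intervalIntegrable)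
    intervalIntegrable_const, intervalIntegral.integral_const, smul_eq_mul]
  field_simp
  ring

theorem mul_cosh_add_mul_sinh_pos {a b : ℝ} (h : |b| < a) (x : ℝ) :
    0 < a * cosh x + b * sinh x := by
  have hsinh : |sinh x| < cosh x := by
    rw [abs_sinh, ← cosh_abs]; exact sinh_lt_cosh _
  have := neg_abs_le (b * sinh x)
  rw [abs_mul] at this
  nlinarith [abs_nonneg b, abs_nonneg (sinh x), cosh_pos x]

theorem tendsto_average_mul_sinh_div_mul_cosh_add_mul_sinh {a b : ℝ} (h : |b| < a) (c : ℝ) :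
    Tendsto (fun t => (∫ s in (0 : ℝ)..t,
      c * sinh (a * s / 2) / (a * cosh (a * s / 2) + b * sinh (a * s / 2))) / t)
      atTop (𝓝 (c / (a + b))) := by
  have ha : 0 < a := (abs_nonneg b).trans_lt h
  have hab : 0 < a + b := by linarith [neg_abs_le b]
  refine tendsto_integral_div_of_tendsto (Continuous.locallyIntegrable (μ := volume) ?_) ?_
  · exact (by fun_prop : Continuous fun s => c * sinh (a * s / 2)).div (by fun_prop)
      fun s => (mul_cosh_add_mul_sinh_pos h _).ne'
  · have := ((tendsto_sinh_div_mul_cosh_add_mul_sinh hab.ne').comp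
      ((tendsto_id.const_mul_atTop ha).atTop_div_const two_pos)).const_mul c
    simpa only [Function.comp_def, id, mul_div_assoc, ← div_eq_mul_inv] using this

theorem stmt14_general (k m μ ς σ ρ q : ℝ)
    (hμ : μ ≠ 0) (hς : 0 < ς) (hσ : 0 < σ)
    (hρ : ρ ∈ Set.Ioo (-1 : ℝ) 1) (hq : q ∈ Set.Ioo (0 : ℝ) 1)
    (β₁ β₂ B lam : ℝ)
    (hβ₂ : β₂ = Real.sqrt (β₁ ^ 2 + q * (1 - q * ρ ^ 2) * μ ^ 2 * σ ^ 2 / ς ^ 2))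
    (hB : B = (1 - q) * (β₂ - β₁) / ((1 - q * ρ ^ 2) * σ ^ 2))
    (hlam : lam = k * m * B)
    (β γ : ℝ → ℝ)
    (hβ : ∀ t, β t = q * (1 - q) * (μ ^ 2 / ς ^ 2) * Real.sinh (β₂ * t / 2) /
        (β₂ * Real.cosh (β₂ * t / 2) + β₁ * Real.sinh (β₂ * t / 2)))
    (hγ : ∀ t, γ t = k * m * ∫ s in (0 : ℝ)..t, β s) :
    Tendsto (fun t => γ t / t) atTop (𝓝 lam) := by
  obtain ⟨hρ₁, hρ₂⟩ := hρ
  obtain ⟨hq₀, hq₁⟩ := hq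
  have hqρ : 0 < 1 - q * ρ ^ 2 := by nlinarith
  have hdisc : 0 < q * (1 - q * ρ ^ 2) * μ ^ 2 * σ ^ 2 / ς ^ 2 := by positivity
  have hβ₂sq : β₂ ^ 2 = β₁ ^ 2 + q * (1 - q * ρ ^ 2) * μ ^ 2 * σ ^ 2 / ς ^ 2 := by
    rw [hβ₂, sq_sqrt (by positivity)]
  have hβ₁β₂ : |β₁| < β₂ := by
    rw [hβ₂]; exact lt_sqrt_of_sq_lt (by rw [sq_abs]; linarith)
  have hβ₂β₁ : 0 < β₂ + β₁ := by linarith [neg_abs_le β₁]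
  have hB' : B = q * (1 - q) * (μ ^ 2 / ς ^ 2) / (β₂ + β₁) := by
    rw [hB, div_eq_div_iff (by positivity) hβ₂β₁.ne']
    field_simp at hβ₂sq ⊢
    linear_combination hβ₂sq
  rw [hlam, hB']
  refine ((tendsto_average_mul_sinh_div_mul_cosh_add_mul_sinh hβ₁β₂ _).const_mul (k * m)).congr
    fun t => ?_
  simp only [hγ, hβ, mul_div_assoc]

/-- Heston model: with `β` the explicit Riccati solution, the function
`γ(t) = k·m̄·∫₀ᵗ β(s) ds` satisfies `γ(t)/t → k·m̄·B = λ` as `t → ∞`. -/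
theorem stmt14 (k m μ ς σ ρ q : ℝ)
    (hk : 0 < k) (hm : 0 < m) (hμ : μ ≠ 0) (hς : 0 < ς) (hσ : 0 < σ)
    (hρ : ρ ∈ Set.Ioo (-1 : ℝ) 1) (hq : q ∈ Set.Ioo (0 : ℝ) 1)
    (β₁ β₂ B lam : ℝ)
    (hβ₁ : β₁ = k + q * μ * ρ * σ / ς)
    (hβ₂ : β₂ = Real.sqrt (β₁ ^ 2 + q * (1 - q * ρ ^ 2) * μ ^ 2 * σ ^ 2 / ς ^ 2))
    (hB : B = (1 - q) * (β₂ - β₁) / ((1 - q * ρ ^ 2) * σ ^ 2))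
    (hlam : lam = k * m * B)
    (β γ : ℝ → ℝ)
    (hβ : ∀ t, β t = q * (1 - q) * (μ ^ 2 / ς ^ 2) * Real.sinh (β₂ * t / 2) /
        (β₂ * Real.cosh (β₂ * t / 2) + β₁ * Real.sinh (β₂ * t / 2)))
    (hγ : ∀ t, γ t = k * m * ∫ s in (0 : ℝ)..t, β s) :
    Tendsto (fun t => γ t / t) atTop (𝓝 lam) :=
  stmt14_general k m μ ς σ ρ q hμ hς hσ hρ hq β₁ β₂ B lam hβ₂ hB hlam β γ hβ hγ
end
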